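/- Let F(s) = ∫₀^π cos θ / (2(1 − cos θ) + s)^(1/2) dθ for s > 0. Then F is strictly positive and strictly decreasing on (0, ∞). -/

import Mathlib

/-!
Folding `[0, π]` onto `[0, π/2]` by `θ ↦ π - θ` (under which `cos θ` changes sign) gives
`F(s) = ∫₀^{π/2} cos θ · (g_s(2(1 - cos θ)) - g_s(2(1 + cos θ))) dθ` with `g_s(x) = (x + s)^{-1/2}`.
On `(0, π/2)` the weight `cos θ` is positive and `2(1 - cos θ) < 2(1 + cos θ)`, so `F(s) > 0`
because `g_s` decreases. For `s < t` the difference `g_s - g_t` is still decreasing in `x`, as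
`(x + s)^{-1/2} - (x + t)^{-1/2} = (t - s) / (√(x+s) √(x+t) (√(x+s) + √(x+t)))`, hence `F(s) > F(t)`.
-/

open Real Set intervalIntegral

theorem intervalIntegral.integral_eq_integral_add_comp_sub_left {f : ℝ → ℝ} {a b : ℝ}
    (hf : IntervalIntegrable f MeasureTheory.volume a b) :
    ∫ x in a..b, f x = ∫ x in a..(a + b) / 2, (f x + f (a + b - x)) := by
  have hmid : (a + b) / 2 ∈ uIcc a b := by
    rcases le_total a b with h | h
    · exact mem_uIcc.2 (Or.inl ⟨by linarith, by linarith⟩)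
    · exact mem_uIcc.2 (Or.inr ⟨by linarith, by linarith⟩)
  have hleft := hf.mono_set (uIcc_subset_uIcc left_mem_uIcc hmid)
  have hright := hf.mono_set (uIcc_subset_uIcc hmid right_mem_uIcc)
  have hm : a + b - (a + b) / 2 = (a + b) / 2 := by ring
  have hreflect : ∫ x in a..(a + b) / 2, f (a + b - x) = ∫ x in (a + b) / 2..b, f x := by
    rw [integral_comp_sub_left, hm, add_sub_cancel_left]
  have hright' :
      IntervalIntegrable (fun x => f (a + b - x)) MeasureTheory.volume a ((a + b) / 2) := by
    simpa only [hm, add_sub_cancel_right] using (hright.comp_sub_left (a + b)).symm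
  rw [integral_add hleft hright', hreflect, integral_add_adjacent_intervals hleft hright]

theorem intervalIntegral.integral_lt_integral_of_lt_on_Ioo {f g : ℝ → ℝ} {a b : ℝ}
    (hf : IntervalIntegrable f MeasureTheory.volume a b)
    (hg : IntervalIntegrable g MeasureTheory.volume a b) (hlt : ∀ x ∈ Ioo a b, f x < g x)
    (hab : a < b) : ∫ x in a..b, f x < ∫ x in a..b, g x := by
  rw [← sub_pos, ← integral_sub hg hf]
  exact intervalIntegral_pos_of_pos_on (hg.sub hf) (fun x hx => sub_pos.2 (hlt x hx)) hab

theorem inv_sqrt_sub_inv_sqrt {u v : ℝ} (hu : 0 < u) (hv : 0 < v) :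
    (√u)⁻¹ - (√v)⁻¹ = (v - u) / (√u * √v * (√u + √v)) := by
  have hsu : 0 < √u := sqrt_pos.2 hu
  have hsv : 0 < √v := sqrt_pos.2 hv
  field_simp
  linear_combination sq_sqrt hv.le - sq_sqrt hu.le

theorem strictAntiOn_inv_sqrt_add_sub_inv_sqrt_add {s t : ℝ} (hst : s < t) :
    StrictAntiOn (fun x => (√(x + s))⁻¹ - (√(x + t))⁻¹) (Ioi (-s)) := by
  intro x hx y hy hxy
  rw [mem_Ioi] at hx hy
  have hxs : 0 < x + s := by linarith
  have hxt : 0 < x + t := by linarith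
  simp only [inv_sqrt_sub_inv_sqrt hxs hxt, inv_sqrt_sub_inv_sqrt (by linarith : 0 < y + s)
    (by linarith : 0 < y + t), add_sub_add_left_eq_sub]
  have := sqrt_pos.2 hxs
  have := sqrt_pos.2 hxt
  gcongr

theorem continuous_inv_sqrt_comp {g : ℝ → ℝ} (hg : Continuous g) (hpos : ∀ x, 0 < g x) :
    Continuous fun x => (√(g x))⁻¹ :=
  (continuous_sqrt.comp hg).inv₀ fun x => (sqrt_pos.2 (hpos x)).ne'

theorem two_mul_one_sub_cos_add_pos {s : ℝ} (hs : 0 < s) (θ : ℝ) : 0 < 2 * (1 - cos θ) + s := by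
  linarith [cos_le_one θ]

theorem two_mul_one_add_cos_add_pos {s : ℝ} (hs : 0 < s) (θ : ℝ) : 0 < 2 * (1 + cos θ) + s := by
  linarith [neg_one_le_cos θ]

theorem continuous_folded_kernel {s : ℝ} (hs : 0 < s) :
    Continuous fun θ => cos θ * ((√(2 * (1 - cos θ) + s))⁻¹ - (√(2 * (1 + cos θ) + s))⁻¹) := by
  refine continuous_cos.mul ((continuous_inv_sqrt_comp ?_ (two_mul_one_sub_cos_add_pos hs)).sub
    (continuous_inv_sqrt_comp ?_ (two_mul_one_add_cos_add_pos hs))) <;> fun_prop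

theorem integral_cos_div_sqrt_eq_integral_folded {s : ℝ} (hs : 0 < s) :
    ∫ θ in (0:ℝ)..π, cos θ / √(2 * (1 - cos θ) + s) =
      ∫ θ in (0:ℝ)..π / 2, cos θ * ((√(2 * (1 - cos θ) + s))⁻¹ - (√(2 * (1 + cos θ) + s))⁻¹) := by
  have hcont : Continuous fun θ => cos θ / √(2 * (1 - cos θ) + s) := by
    refine continuous_cos.div (continuous_sqrt.comp (by fun_prop)) fun θ => ?_
    exact (sqrt_pos.2 (two_mul_one_sub_cos_add_pos hs θ)).ne'
  rw [integral_eq_integral_add_comp_sub_left (hcont.intervalIntegrable _ _), zero_add]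
  congr 1 with θ
  rw [cos_pi_sub, sub_neg_eq_add]
  ring

/-- The elliptic-integral kernel
`F(s) = ∫₀^π cos θ / (2(1 − cos θ) + s)^(1/2) dθ`
is strictly positive and strictly decreasing on `(0, ∞)`. -/
theorem stmt_6 :
    (∀ s : ℝ, 0 < s →
      0 < ∫ θ in (0:ℝ)..Real.pi, Real.cos θ / Real.sqrt (2 * (1 - Real.cos θ) + s)) ∧
    StrictAntiOn
      (fun s : ℝ => ∫ θ in (0:ℝ)..Real.pi, Real.cos θ / Real.sqrt (2 * (1 - Real.cos θ) + s))
      (Set.Ioi 0) := by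
  have hcos : ∀ θ ∈ Ioo 0 (π / 2), 0 < cos θ := fun θ hθ =>
    cos_pos_of_mem_Ioo ⟨by linarith [hθ.1, pi_pos], hθ.2⟩
  refine ⟨fun s hs => ?_, fun s hs t ht hst => ?_⟩
  · rw [integral_cos_div_sqrt_eq_integral_folded hs]
    refine intervalIntegral_pos_of_pos_on ((continuous_folded_kernel hs).intervalIntegrable _ _)
      (fun θ hθ => mul_pos (hcos θ hθ) (sub_pos.2 ?_)) (by positivity)
    gcongr
    · exact sqrt_pos.2 (two_mul_one_sub_cos_add_pos hs θ)
    · exact (two_mul_one_sub_cos_add_pos hs θ).le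
    · linarith [hcos θ hθ]
  · rw [mem_Ioi] at hs ht
    simp only [integral_cos_div_sqrt_eq_integral_folded hs,
      integral_cos_div_sqrt_eq_integral_folded ht]
    refine integral_lt_integral_of_lt_on_Ioo ((continuous_folded_kernel ht).intervalIntegrable _ _)
      ((continuous_folded_kernel hs).intervalIntegrable _ _) (fun θ hθ => ?_) (by positivity)
    have hanti := strictAntiOn_inv_sqrt_add_sub_inv_sqrt_add hst
      (mem_Ioi.2 (by linarith [cos_le_one θ] : -s < 2 * (1 - cos θ)))
      (mem_Ioi.2 (by linarith [neg_one_le_cos θ] : -s < 2 * (1 + cos θ)))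
      (by linarith [hcos θ hθ])
    refine mul_lt_mul_of_pos_left ?_ (hcos θ hθ)
    linarith
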